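/- arXiv:2006.05319 — 6 statements merged into one kernel-verified Lean document; each statement's English description precedes it below -/
import Mathlib

section
/- A symmetric matrix C is completely positive if and only if ⟨C, X⟩ ≥ 0 for every copositive matrix X, where ⟨·,·⟩ is the trace inner product. In other words, the completely positive cone and the copositive cone are dual to each other. -/
open Matrix

/-- The completely positive cone: matrices of the form B * Bᵀ with B entrywise nonnegative. -/
def CompletelyPositive {d : ℕ} (C : Matrix (Fin d) (Fin d) ℝ) : Prop :=
  ∃ (k : ℕ) (B : Matrix (Fin d) (Fin k) ℝ), (∀ i j, 0 ≤ B i j) ∧ C = B * B.transpose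

/-- A symmetric matrix X is copositive if yᵀXy ≥ 0 for all entrywise nonnegative y. -/
def Copositive {d : ℕ} (X : Matrix (Fin d) (Fin d) ℝ) : Prop :=
  ∀ y : Fin d → ℝ, (∀ i, 0 ≤ y i) → 0 ≤ y ⬝ᵥ X.mulVec y

/-! The completely positive cone is generated by the rank-one matrices `v vᵀ` with `v ≥ 0`, and
`v ↦ v vᵀ` maps the standard simplex onto a compact base of it, lying in the hyperplane where the
entries sum to `1`. A cone over such a base is closed, because Carathéodory's theorem makes the
convex hull of the base compact. Copositivity of `X` says exactly that `X` pairs nonnegatively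
with the generators, which gives one direction. Conversely, Farkas' lemma separates a matrix `C`
outside the closed cone by a linear functional; represented through the trace pairing and then
symmetrized, it is a copositive `X` with `tr (C X) < 0`. -/

open Set Pointwise

section ConvexGeometry

variable {E : Type*} [AddCommGroup E] [Module ℝ E]

theorem PointedCone.eq_zero_or_mem_convexCone_hull_of_mem_hull {K : Set E} {x : E}
    (hx : x ∈ PointedCone.hull ℝ K) :
    x = 0 ∨ x ∈ ConvexCone.hull ℝ (convexHull ℝ K) := by
  induction hx using Submodule.span_induction with
  | mem x hx => exact .inr (ConvexCone.subset_hull (subset_convexHull ℝ K hx))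
  | zero => exact .inl rfl
  | add x y _ _ hx hy =>
    rcases hx with rfl | hx
    · simpa using hy
    rcases hy with rfl | hy
    · simpa using Or.inr hx
    exact .inr (ConvexCone.add_mem _ hx hy)
  | smul c x _ hx =>
    rcases hx with rfl | hx
    · simp
    rcases eq_or_lt_of_le c.2 with hc | hc
    · simp [show c = 0 from Subtype.ext hc.symm]
    · exact .inr (ConvexCone.smul_mem _ hc hx)

variable [TopologicalSpace E]

theorem isCompact_convexHull [ContinuousAdd E] [ContinuousSMul ℝ E] [FiniteDimensional ℝ E]
    {s : Set E} (hs : IsCompact s) : IsCompact (convexHull ℝ s) := by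
  let comb (m : ℕ) (p : (Fin m → ℝ) × (Fin m → E)) : E := ∑ i, p.1 i • p.2 i
  let params (m : ℕ) := stdSimplex ℝ (Fin m) ×ˢ univ.pi fun _ : Fin m => s
  -- Carathéodory: finitely many points, at most `finrank ℝ E + 1` of them, suffice.
  suffices h : convexHull ℝ s = ⋃ m ∈ Finset.range (Module.finrank ℝ E + 2), comb m '' params m by
    rw [h]
    refine Finset.isCompact_biUnion _ fun m _ => ?_
    exact ((isCompact_stdSimplex ℝ (Fin m)).prod (isCompact_univ_pi fun _ => hs)).image
      (by fun_prop)
  refine Subset.antisymm (fun x hx => ?_) ?_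
  · obtain ⟨ι, _, z, w, hzs, hz, hw, hw1, rfl⟩ := eq_pos_convex_span_of_mem_convexHull hx
    have hcard : Fintype.card ι ≤ Module.finrank ℝ E + 1 :=
      hz.card_le_finrank_succ.trans (Nat.succ_le_succ (Submodule.finrank_le _))
    let e := (Fintype.equivFin ι).symm
    refine mem_iUnion₂.2 ⟨_, Finset.mem_range.2 (Nat.lt_succ_of_le hcard), (w ∘ e, z ∘ e),
      ⟨⟨fun i => (hw _).le, ?_⟩, fun i _ => hzs ⟨_, rfl⟩⟩, e.sum_comp fun i => w i • z i⟩
    simpa only [Function.comp_apply, e.sum_comp] using hw1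
  · simp only [iUnion_subset_iff]
    rintro m - - ⟨⟨w, z⟩, ⟨⟨hw, hw1⟩, hz⟩, rfl⟩
    change ∑ i, w i • z i ∈ _
    rw [← Finset.centerMass_eq_of_sum_1 _ _ hw1]
    exact Finset.univ.centerMass_mem_convexHull (fun i _ => hw i) (by simp [hw1])
      fun i _ => hz i trivial

theorem PointedCone.isClosed_hull_of_isCompact [IsTopologicalAddGroup E] [ContinuousSMul ℝ E]
    [T2Space E] [FiniteDimensional ℝ E] (φ : E →ₗ[ℝ] ℝ) {K : Set E} (hK : IsCompact K)
    (hφ : ∀ x ∈ K, φ x = 1) : IsClosed (PointedCone.hull ℝ K : Set E) := by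
  set L := convexHull ℝ K
  have hφL : ∀ x ∈ L, φ x = 1 :=
    fun x hx => convexHull_min hφ ((convex_singleton 1).linear_preimage φ) hx
  have hLK : L ⊆ PointedCone.hull ℝ K :=
    convexHull_min PointedCone.subset_hull (PointedCone.hull ℝ K).convex
  refine isClosed_of_closure_subset fun x hx => ?_
  set r := φ x + 1
  -- Near `x` the cone is contained in the compact set `{0} ∪ [0, r] • L`.
  have hU : IsOpen {y | φ y < r} := isOpen_lt φ.continuous_of_finiteDimensional continuous_const
  have hsub : {y | φ y < r} ∩ PointedCone.hull ℝ K ⊆ insert 0 (Icc 0 r • L) := by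
    rintro y ⟨hyr, hy⟩
    rcases eq_zero_or_mem_convexCone_hull_of_mem_hull hy with rfl | hy
    · exact mem_insert _ _
    obtain ⟨t, ht, z, hz, rfl⟩ := (ConvexCone.mem_hull_of_convex (convex_convexHull ℝ K)).1 hy
    replace hyr : t < r := by simpa [hφL z hz] using hyr
    exact mem_insert_of_mem _ (smul_mem_smul ⟨ht.le, hyr.le⟩ hz)
  have hcpt : IsCompact (insert 0 (Icc 0 r • L)) :=
    (isCompact_Icc.smul_set (isCompact_convexHull hK)).insert 0
  have hxr : φ x < r := lt_add_one _
  rcases hcpt.isClosed.closure_subset (closure_mono hsub (hU.inter_closure ⟨hxr, hx⟩)) with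
    rfl | ⟨t, ht, z, hz, rfl⟩
  · exact zero_mem _
  · exact PointedCone.smul_mem _ ht.1 (hLK hz)

end ConvexGeometry

instance Matrix.locallyConvexSpace {m n : Type*} : LocallyConvexSpace ℝ (Matrix m n ℝ) :=
  Pi.locallyConvexSpace

namespace Matrix

variable {n R : Type*} [Fintype n] [CommSemiring R]

theorem mul_transpose_eq_sum_vecMulVec {m : Type*} (B : Matrix m n R) :
    B * Bᵀ = ∑ p, vecMulVec (B.col p) (B.col p) := by
  ext i j
  simp [mul_apply, Matrix.sum_apply, vecMulVec_apply, col]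

theorem dotProduct_mulVec_self_eq_trace (v : n → R) (X : Matrix n n R) :
    v ⬝ᵥ X *ᵥ v = trace (vecMulVec v v * X) := by
  rw [vecMulVec_mul, trace_vecMulVec, dotProduct_mulVec, dotProduct_comm]

theorem trace_mul_add_transpose {M : Matrix n n R} (hM : M.IsSymm) (Y : Matrix n n R) :
    trace (M * (Y + Yᵀ)) = 2 * trace (M * Y) := by
  rw [mul_add, trace_add, ← trace_transpose (M * Yᵀ), transpose_mul, transpose_transpose, hM.eq,
    trace_mul_comm]
  ring

theorem trace_mul_of_apply_single [DecidableEq n] (f : Matrix n n R →ₗ[R] R) (M : Matrix n n R) :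
    trace (M * of fun i j => f (single j i 1)) = f M := by
  conv_rhs => rw [matrix_eq_sum_single M]
  simp only [map_sum, trace, diag, mul_apply, of_apply]
  refine Finset.sum_congr rfl fun i _ => Finset.sum_congr rfl fun j _ => ?_
  rw [← smul_eq_mul, ← map_smul, smul_single, smul_eq_mul, mul_one]

end Matrix

section CompletelyPositiveCone

variable {d : ℕ}

theorem completelyPositive_mul_transpose {ι : Type*} [Fintype ι] {B : Matrix (Fin d) ι ℝ}
    (hB : ∀ i j, 0 ≤ B i j) : CompletelyPositive (B * Bᵀ) :=
  ⟨_, B.submatrix id (Fintype.equivFin ι).symm, fun _ _ => hB _ _,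
    by rw [transpose_submatrix, submatrix_mul_equiv, submatrix_id_id]⟩

theorem completelyPositive_vecMulVec_self {v : Fin d → ℝ} (hv : ∀ i, 0 ≤ v i) :
    CompletelyPositive (vecMulVec v v) := by
  rw [vecMulVec_eq Unit, ← transpose_replicateCol]
  exact completelyPositive_mul_transpose fun i _ => hv i

def completelyPositiveCone (d : ℕ) : PointedCone ℝ (Matrix (Fin d) (Fin d) ℝ) where
  carrier := {C | CompletelyPositive C}
  zero_mem' := ⟨0, 0, fun _ _ => le_rfl, by simp⟩
  add_mem' := by
    rintro _ _ ⟨k, B, hB, rfl⟩ ⟨l, B', hB', rfl⟩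
    have := completelyPositive_mul_transpose (B := fromCols B B')
      (by rintro i (j | j) <;> simp [hB, hB'])
    rwa [transpose_fromCols, fromCols_mul_fromRows] at this
  smul_mem' := by
    rintro c _ ⟨k, B, hB, rfl⟩
    refine ⟨k, √(c : ℝ) • B, fun i j => mul_nonneg (Real.sqrt_nonneg _) (hB i j), ?_⟩
    rw [transpose_smul, Matrix.smul_mul, Matrix.mul_smul, smul_smul, Real.mul_self_sqrt c.2]
    rfl

/-- A compact base of the completely positive cone: the entries of `v vᵀ` sum to
`(∑ i, v i) ^ 2 = 1`. -/
def cpBase (d : ℕ) : Set (Matrix (Fin d) (Fin d) ℝ) :=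
  (fun v => vecMulVec v v) '' stdSimplex ℝ (Fin d)

theorem vecMulVec_self_mem_hull_cpBase {v : Fin d → ℝ} (hv : ∀ i, 0 ≤ v i) :
    vecMulVec v v ∈ PointedCone.hull ℝ (cpBase d) := by
  obtain hs | hs := (Finset.sum_nonneg fun i _ => hv i).eq_or_lt
  · obtain rfl : v = 0 := (Fintype.sum_eq_zero_iff_of_nonneg hv).1 hs.symm
    simp
  set s := ∑ i, v i
  have hw : s⁻¹ • v ∈ stdSimplex ℝ (Fin d) :=
    ⟨fun i => smul_nonneg (inv_nonneg.2 hs.le) (hv i), by simp [← Finset.mul_sum, s, hs.ne']⟩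
  have : vecMulVec v v = (s ^ 2) • vecMulVec (s⁻¹ • v) (s⁻¹ • v) := by
    rw [smul_vecMulVec, vecMulVec_smul, smul_smul, smul_smul,
      show s ^ 2 * s⁻¹ * s⁻¹ = 1 by field_simp [hs.ne'], one_smul]
  rw [this]
  exact PointedCone.smul_mem _ (sq_nonneg s) (PointedCone.subset_hull ⟨_, hw, rfl⟩)

theorem completelyPositiveCone_eq_hull :
    completelyPositiveCone d = PointedCone.hull ℝ (cpBase d) := by
  refine le_antisymm ?_ (Submodule.span_le.2 ?_)
  · rintro _ ⟨k, B, hB, rfl⟩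
    rw [mul_transpose_eq_sum_vecMulVec]
    exact Submodule.sum_mem _ fun p _ => vecMulVec_self_mem_hull_cpBase fun i => hB i p
  · rintro _ ⟨v, hv, rfl⟩
    exact completelyPositive_vecMulVec_self hv.1

theorem isClosed_completelyPositiveCone :
    IsClosed (completelyPositiveCone d : Set (Matrix (Fin d) (Fin d) ℝ)) := by
  let entrySum : Matrix (Fin d) (Fin d) ℝ →ₗ[ℝ] ℝ :=
    { toFun M := ∑ i, ∑ j, M i j
      map_add' M N := by simp [Finset.sum_add_distrib]
      map_smul' c M := by simp [Finset.mul_sum] }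
  rw [completelyPositiveCone_eq_hull]
  refine PointedCone.isClosed_hull_of_isCompact entrySum
    ((isCompact_stdSimplex ℝ (Fin d)).image (by fun_prop)) ?_
  rintro _ ⟨v, hv, rfl⟩
  simp [entrySum, vecMulVec_apply, ← Finset.mul_sum, hv.2]

theorem trace_mul_nonneg_of_copositive {C X : Matrix (Fin d) (Fin d) ℝ}
    (hC : CompletelyPositive C) (hX : Copositive X) : 0 ≤ trace (C * X) := by
  obtain ⟨k, B, hB, rfl⟩ := hC
  rw [mul_transpose_eq_sum_vecMulVec, Finset.sum_mul, trace_sum]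
  refine Finset.sum_nonneg fun p _ => ?_
  rw [← dotProduct_mulVec_self_eq_trace]
  exact hX _ fun i => hB i p

end CompletelyPositiveCone

theorem cp_iff_nonneg_inner_with_copositive {d : ℕ} (C : Matrix (Fin d) (Fin d) ℝ)
    (hC : C.IsSymm) :
    CompletelyPositive C ↔
      ∀ X : Matrix (Fin d) (Fin d) ℝ, X.IsSymm → Copositive X → 0 ≤ (C * X).trace := by
  refine ⟨fun hCP X _ hX => trace_mul_nonneg_of_copositive hCP hX, fun h => ?_⟩
  by_contra hCP
  obtain ⟨f, hf, hfC⟩ := ProperCone.hyperplane_separation_point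
    ⟨completelyPositiveCone d, isClosed_completelyPositiveCone⟩ hCP
  set Y : Matrix (Fin d) (Fin d) ℝ := of fun i j => f (single j i 1)
  have hfY (M : Matrix (Fin d) (Fin d) ℝ) : trace (M * Y) = f M :=
    trace_mul_of_apply_single f.toLinearMap M
  have hY : Copositive (Y + Yᵀ) := fun v hv => by
    rw [dotProduct_mulVec_self_eq_trace, trace_mul_add_transpose (transpose_vecMulVec v v), hfY]
    exact mul_nonneg zero_le_two (hf _ (completelyPositive_vecMulVec_self hv))
  have := h _ (isSymm_add_transpose_self Y) hY
  rw [trace_mul_add_transpose hC, hfY] at this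
  linarith
end

section
/- With Q, Φ, x* as above and the relevance measure ηᵢ = (bᵢ − aᵢᵀx*) / sqrt(aᵢᵀ ∇²Φ(x*)⁻¹ aᵢ) for each linear constraint i with aᵢ ≠ 0: if ηᵢ ≥ m+1, then every x with (x − x*)ᵀ ∇²Φ(x*) (x − x*) ≤ (m+1)² satisfies aᵢᵀx ≤ bᵢ. -/
open Matrix

noncomputable def barrier {n m : ℕ} (a : Fin m → Fin n → ℝ) (b : Fin m → ℝ) (r : ℝ)
    (x : Fin n → ℝ) : ℝ :=
  -Real.log (r ^ 2 - ∑ j, x j ^ 2) - ∑ i, Real.log (b i - a i ⬝ᵥ x)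

def interiorDom {n m : ℕ} (a : Fin m → Fin n → ℝ) (b : Fin m → ℝ) (r : ℝ) :
    Set (Fin n → ℝ) :=
  {x | (∑ j, x j ^ 2) < r ^ 2 ∧ ∀ i, a i ⬝ᵥ x < b i}

/-- The Hessian of the barrier at x*. -/
noncomputable def barrierHess {n m : ℕ} (a : Fin m → Fin n → ℝ) (b : Fin m → ℝ) (r : ℝ)
    (xstar : Fin n → ℝ) : Matrix (Fin n) (Fin n) ℝ :=
  (2 / (r ^ 2 - ∑ j, xstar j ^ 2)) • (1 : Matrix (Fin n) (Fin n) ℝ) +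
    (4 / (r ^ 2 - ∑ j, xstar j ^ 2) ^ 2) • vecMulVec xstar xstar +
    ∑ i, (1 / (b i - a i ⬝ᵥ xstar) ^ 2) • vecMulVec (a i) (a i)

/-- The relevance measure ηᵢ. -/
noncomputable def relevance {n m : ℕ} (a : Fin m → Fin n → ℝ) (b : Fin m → ℝ) (r : ℝ)
    (xstar : Fin n → ℝ) (i : Fin m) : ℝ :=
  (b i - a i ⬝ᵥ xstar) / Real.sqrt (a i ⬝ᵥ (barrierHess a b r xstar)⁻¹.mulVec (a i))

-- auxiliary lemmas

lemma vecMulVec_mulVec' {n : ℕ} (u z : Fin n → ℝ) :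
    (vecMulVec u u).mulVec z = (u ⬝ᵥ z) • u := by
  ext i
  simp [mulVec, vecMulVec_apply, dotProduct, Finset.mul_sum, mul_comm, mul_left_comm]

lemma transpose_vecMulVec' {n : ℕ} (u : Fin n → ℝ) :
    (vecMulVec u u)ᵀ = vecMulVec u u := by
  ext i j
  simp [vecMulVec_apply, mul_comm]

lemma barrierHess_transpose {n m : ℕ} (a : Fin m → Fin n → ℝ) (b : Fin m → ℝ) (r : ℝ)
    (xstar : Fin n → ℝ) : (barrierHess a b r xstar)ᵀ = barrierHess a b r xstar := by
  unfold barrierHess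
  simp [transpose_add, transpose_smul, transpose_one, transpose_vecMulVec',
    Matrix.transpose_sum]

lemma sum_mulVec' {n m : ℕ} (M : Fin m → Matrix (Fin n) (Fin n) ℝ) (y : Fin n → ℝ) :
    (∑ i, M i).mulVec y = ∑ i, (M i).mulVec y := by
  ext j
  simp only [mulVec, dotProduct, Finset.sum_apply, Matrix.sum_apply, Finset.sum_mul]
  rw [Finset.sum_comm]

lemma dotProduct_sum' {n m : ℕ} (y : Fin n → ℝ) (v : Fin m → Fin n → ℝ) :
    y ⬝ᵥ ∑ i, v i = ∑ i, y ⬝ᵥ v i := by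
  simp only [dotProduct, Finset.sum_apply, Finset.mul_sum]
  rw [Finset.sum_comm]

lemma barrierHess_quadform {n m : ℕ} (a : Fin m → Fin n → ℝ) (b : Fin m → ℝ) (r : ℝ)
    (xstar : Fin n → ℝ) (y : Fin n → ℝ) :
    y ⬝ᵥ (barrierHess a b r xstar).mulVec y =
      (2 / (r ^ 2 - ∑ j, xstar j ^ 2)) * (y ⬝ᵥ y) +
      (4 / (r ^ 2 - ∑ j, xstar j ^ 2) ^ 2) * (xstar ⬝ᵥ y) ^ 2 +
      ∑ i, (1 / (b i - a i ⬝ᵥ xstar) ^ 2) * (a i ⬝ᵥ y) ^ 2 := by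
  unfold barrierHess
  rw [Matrix.add_mulVec, Matrix.add_mulVec, dotProduct_add, dotProduct_add]
  congr 1
  · congr 1
    · rw [smul_mulVec, dotProduct_smul, Matrix.one_mulVec]
      simp [smul_eq_mul]
    · rw [smul_mulVec, dotProduct_smul, vecMulVec_mulVec', dotProduct_smul,
        smul_eq_mul, smul_eq_mul, dotProduct_comm y xstar]
      ring
  · rw [sum_mulVec', dotProduct_sum']
    refine Finset.sum_congr rfl fun i _ => ?_
    rw [smul_mulVec, dotProduct_smul, vecMulVec_mulVec', dotProduct_smul,
      smul_eq_mul, smul_eq_mul, dotProduct_comm y (a i)]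
    ring

lemma barrierHess_posDef {n m : ℕ} (a : Fin m → Fin n → ℝ) (b : Fin m → ℝ) (r : ℝ)
    (xstar : Fin n → ℝ) (hs : 0 < r ^ 2 - ∑ j, xstar j ^ 2) :
    (barrierHess a b r xstar).PosDef := by
  rw [Matrix.posDef_iff_dotProduct_mulVec]
  constructor
  · show (barrierHess a b r xstar)ᴴ = _
    simpa using barrierHess_transpose a b r xstar
  · intro y hy
    have h1 : (0:ℝ) < y ⬝ᵥ y := by
      have hnn : (0:ℝ) ≤ y ⬝ᵥ y :=
        Finset.sum_nonneg fun j _ => mul_self_nonneg _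
      rcases hnn.lt_or_eq with h | h
      · exact h
      · exact absurd (dotProduct_self_eq_zero.mp h.symm) hy
    show (0:ℝ) < star y ⬝ᵥ (barrierHess a b r xstar).mulVec y
    have hsy : star y = y := by ext j; simp
    rw [hsy, barrierHess_quadform]
    have hA : 0 < (2 / (r ^ 2 - ∑ j, xstar j ^ 2)) * (y ⬝ᵥ y) :=
      mul_pos (by positivity) h1
    have hB : 0 ≤ (4 / (r ^ 2 - ∑ j, xstar j ^ 2) ^ 2) * (xstar ⬝ᵥ y) ^ 2 := by positivity
    have hC : 0 ≤ ∑ i, (1 / (b i - a i ⬝ᵥ xstar) ^ 2) * (a i ⬝ᵥ y) ^ 2 :=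
      Finset.sum_nonneg fun i _ => by positivity
    linarith

/-- If ηᵢ ≥ m+1, the i-th constraint is redundant: every point of the Dikin
ellipsoid of radius m+1 around the analytic center satisfies aᵢᵀx ≤ bᵢ. -/
theorem redundant_constraint_of_large_relevance {n m : ℕ}
    (a : Fin m → Fin n → ℝ) (b : Fin m → ℝ) (r : ℝ) (hr : 0 < r)
    (xstar : Fin n → ℝ) (hxstar : xstar ∈ interiorDom a b r)
    (hmin : ∀ x ∈ interiorDom a b r, barrier a b r xstar ≤ barrier a b r x)
    (i : Fin m) (hai : a i ≠ 0) (heta : (m + 1 : ℝ) ≤ relevance a b r xstar i) :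
    ∀ x : Fin n → ℝ,
      (x - xstar) ⬝ᵥ (barrierHess a b r xstar).mulVec (x - xstar) ≤ (m + 1 : ℝ) ^ 2 →
      a i ⬝ᵥ x ≤ b i := by
  intro x hx
  obtain ⟨hball, hfeas⟩ := hxstar
  have hs : 0 < r ^ 2 - ∑ j, xstar j ^ 2 := sub_pos.mpr hball
  have hPD := barrierHess_posDef a b r xstar hs
  have hM1 : (0:ℝ) < (m:ℝ) + 1 := by positivity
  simp only [relevance] at heta
  set H := barrierHess a b r xstar with hHdef
  set c := a i ⬝ᵥ H⁻¹.mulVec (a i) with hc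
  have hsqrtc_pos : 0 < Real.sqrt c := by
    rcases (Real.sqrt_nonneg c).lt_or_eq with h | h
    · exact h
    · rw [← h, div_zero] at heta; linarith
  have hcpos : 0 < c := Real.sqrt_pos.mp hsqrtc_pos
  have hdet : IsUnit H.det := isUnit_iff_ne_zero.mpr hPD.det_pos.ne'
  have hHT : Hᵀ = H := barrierHess_transpose a b r xstar
  have hdot : ∀ v w : Fin n → ℝ, v ⬝ᵥ H.mulVec w = (H.mulVec v) ⬝ᵥ w := by
    intro v w
    rw [Matrix.dotProduct_mulVec, ← Matrix.mulVec_transpose, hHT]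
  set u := H⁻¹.mulVec (a i) with hu
  have hHu : H.mulVec u = a i := by
    rw [hu, Matrix.mulVec_mulVec, Matrix.mul_nonsing_inv H hdet, Matrix.one_mulVec]
  set y := x - xstar with hy
  set d := a i ⬝ᵥ y with hd
  set q := y ⬝ᵥ H.mulVec y with hq
  have hpsd : ∀ z : Fin n → ℝ, 0 ≤ z ⬝ᵥ H.mulVec z := by
    intro z
    rw [hHdef, barrierHess_quadform]
    have h1 : (0:ℝ) ≤ z ⬝ᵥ z := Finset.sum_nonneg fun j _ => mul_self_nonneg _
    have h2 : (0:ℝ) ≤ (2 / (r ^ 2 - ∑ j, xstar j ^ 2)) * (z ⬝ᵥ z) :=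
      mul_nonneg (by positivity) h1
    have h3 : (0:ℝ) ≤ (4 / (r ^ 2 - ∑ j, xstar j ^ 2) ^ 2) * (xstar ⬝ᵥ z) ^ 2 := by positivity
    have h4 : (0:ℝ) ≤ ∑ i, (1 / (b i - a i ⬝ᵥ xstar) ^ 2) * (a i ⬝ᵥ z) ^ 2 :=
      Finset.sum_nonneg fun i _ => by positivity
    linarith
  have e1 : u ⬝ᵥ H.mulVec y = d := by rw [hdot, hHu]
  have e2 : y ⬝ᵥ H.mulVec u = d := by rw [hHu]; rw [hd, dotProduct_comm]
  have e3 : u ⬝ᵥ H.mulVec u = c := by rw [hdot, hHu]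
  set t : ℝ := d / c with ht
  have expand : (y - t • u) ⬝ᵥ H.mulVec (y - t • u) = q - 2 * t * d + t ^ 2 * c := by
    simp only [Matrix.mulVec_sub, Matrix.mulVec_smul, sub_dotProduct, dotProduct_sub,
      dotProduct_smul, smul_dotProduct, smul_eq_mul, e1, e2, e3]
    rw [← hq]
    ring
  have hcs : 0 ≤ q - 2 * t * d + t ^ 2 * c := expand ▸ hpsd (y - t • u)
  have habbr : 2 * t * d - t ^ 2 * c = d ^ 2 / c := by
    rw [ht]; field_simp; ring
  have hdq : d ^ 2 / c ≤ q := by linarith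
  have hd2 : d ^ 2 ≤ q * c := (div_le_iff₀ hcpos).mp hdq
  have hqnn : 0 ≤ q := hpsd y
  have hd2' : d ^ 2 ≤ c * ((m:ℝ) + 1) ^ 2 := by nlinarith
  have hdle : d ≤ ((m:ℝ) + 1) * Real.sqrt c := by
    have h1 : d ≤ |d| := le_abs_self d
    have h2 : |d| = Real.sqrt (d ^ 2) := (Real.sqrt_sq_eq_abs d).symm
    have h3 : Real.sqrt (d ^ 2) ≤ Real.sqrt (c * ((m:ℝ) + 1) ^ 2) :=
      Real.sqrt_le_sqrt hd2'
    have h4 : Real.sqrt (c * ((m:ℝ) + 1) ^ 2) = ((m:ℝ) + 1) * Real.sqrt c := by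
      rw [Real.sqrt_mul hcpos.le, Real.sqrt_sq hM1.le, mul_comm]
    linarith
  have hb : ((m:ℝ) + 1) * Real.sqrt c ≤ b i - a i ⬝ᵥ xstar :=
    (le_div_iff₀ hsqrtc_pos).mp heta
  have hxd : a i ⬝ᵥ x = a i ⬝ᵥ xstar + d := by
    rw [hd, hy, dotProduct_sub]; ring
  linarith
end

section
/- With Q and x* as above (Q = {x : ‖x‖² ≤ r², Ax ≤ b} with nonempty interior, x* its analytic center, H = ∇²Φ(x*)): every relevance measure ηᵢ = (bᵢ − aᵢᵀx*)/sqrt(aᵢᵀ H⁻¹ aᵢ) satisfies ηᵢ ≥ 1 for each i with aᵢ ≠ 0. -/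
/-!
The barrier Hessian `H` dominates each rank-one term `aᵢ aᵢᵀ / (bᵢ - aᵢᵀx*)²` in the Loewner
order, hence `aᵢᵀ H⁻¹ aᵢ ≤ (bᵢ - aᵢᵀx*)²`: the unit Dikin ellipsoid at `x*`, whose support
function in direction `aᵢ` is `√(aᵢᵀ H⁻¹ aᵢ)`, lies in the halfspace `aᵢᵀx ≤ bᵢ`.
-/

open Matrix

section Dikin

variable {ι : Type*} [Fintype ι]

lemma dotProduct_vecMulVec_self_mulVec (v y : ι → ℝ) :
    y ⬝ᵥ vecMulVec v v *ᵥ y = (v ⬝ᵥ y) ^ 2 := by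
  rw [vecMulVec_mulVec, op_smul_eq_smul, dotProduct_smul, smul_eq_mul,
    dotProduct_comm y v, sq]

/-- At `y = H⁻¹ v` the hypothesis reads `(vᵀ H⁻¹ v)² ≤ s · vᵀ H⁻¹ v`. -/
lemma dotProduct_inv_mulVec_le [DecidableEq ι] {H : Matrix ι ι ℝ} (hH : IsUnit H.det)
    {v : ι → ℝ} {s : ℝ} (hs : 0 ≤ s) (h : ∀ y, (v ⬝ᵥ y) ^ 2 ≤ s * (y ⬝ᵥ H *ᵥ y)) :
    v ⬝ᵥ H⁻¹ *ᵥ v ≤ s := by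
  have hHy : H *ᵥ (H⁻¹ *ᵥ v) = v := by
    rw [mulVec_mulVec, mul_nonsing_inv _ hH, one_mulVec]
  have key := h (H⁻¹ *ᵥ v)
  rw [hHy, dotProduct_comm (H⁻¹ *ᵥ v)] at key
  nlinarith

end Dikin

section Barrier

variable {n m : ℕ} (a : Fin m → Fin n → ℝ) (b : Fin m → ℝ) (r : ℝ) {x : Fin n → ℝ}

lemma barrierHess_posDef_s9 (hx : ∑ j, x j ^ 2 < r ^ 2) : (barrierHess a b r x).PosDef := by
  have hα : 0 < r ^ 2 - ∑ j, x j ^ 2 := sub_pos.2 hx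
  refine ((PosDef.one.smul (by positivity)).add_posSemidef
    ((posSemidef_vecMulVec_self_star x).smul (by positivity))).add_posSemidef
    (posSemidef_sum _ fun i _ => (posSemidef_vecMulVec_self_star (a i)).smul (by positivity))

lemma dotProduct_barrierHess_mulVec (y : Fin n → ℝ) :
    y ⬝ᵥ barrierHess a b r x *ᵥ y =
      2 / (r ^ 2 - ∑ j, x j ^ 2) * (y ⬝ᵥ y) + 4 / (r ^ 2 - ∑ j, x j ^ 2) ^ 2 * (x ⬝ᵥ y) ^ 2 +
        ∑ i, 1 / (b i - a i ⬝ᵥ x) ^ 2 * (a i ⬝ᵥ y) ^ 2 := by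
  simp only [barrierHess, add_mulVec, smul_mulVec, sum_mulVec, one_mulVec, dotProduct_add,
    dotProduct_smul, dotProduct_sum, dotProduct_vecMulVec_self_mulVec, smul_eq_mul]

lemma sq_dotProduct_le_barrierHess (i : Fin m) (hx : ∑ j, x j ^ 2 < r ^ 2)
    (hi : a i ⬝ᵥ x < b i) (y : Fin n → ℝ) :
    (a i ⬝ᵥ y) ^ 2 ≤ (b i - a i ⬝ᵥ x) ^ 2 * (y ⬝ᵥ barrierHess a b r x *ᵥ y) := by
  have hα : 0 < r ^ 2 - ∑ j, x j ^ 2 := sub_pos.2 hx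
  have hc : 0 < (b i - a i ⬝ᵥ x) ^ 2 := by have := sub_pos.2 hi; positivity
  have hterm : 1 / (b i - a i ⬝ᵥ x) ^ 2 * (a i ⬝ᵥ y) ^ 2 ≤
      ∑ k, 1 / (b k - a k ⬝ᵥ x) ^ 2 * (a k ⬝ᵥ y) ^ 2 :=
    Finset.single_le_sum (f := fun k => 1 / (b k - a k ⬝ᵥ x) ^ 2 * (a k ⬝ᵥ y) ^ 2)
      (fun k _ => by positivity) (Finset.mem_univ i)
  have hball : 0 ≤ 2 / (r ^ 2 - ∑ j, x j ^ 2) * (y ⬝ᵥ y) :=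
    mul_nonneg (by positivity) (dotProduct_self_star_nonneg y)
  have hcenter : 0 ≤ 4 / (r ^ 2 - ∑ j, x j ^ 2) ^ 2 * (x ⬝ᵥ y) ^ 2 := by positivity
  rw [dotProduct_barrierHess_mulVec, ← div_le_iff₀' hc]
  rw [one_div_mul_eq_div] at hterm
  linarith

end Barrier

theorem relevance_ge_one_general {n m : ℕ}
    (a : Fin m → Fin n → ℝ) (b : Fin m → ℝ) (r : ℝ)
    (xstar : Fin n → ℝ) (hxstar : xstar ∈ interiorDom a b r)
    (i : Fin m) (hai : a i ≠ 0) :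
    1 ≤ relevance a b r xstar i := by
  have hH := barrierHess_posDef_s9 a b r hxstar.1
  have hpos : 0 < a i ⬝ᵥ (barrierHess a b r xstar)⁻¹ *ᵥ a i := by
    simpa using hH.inv.dotProduct_mulVec_pos hai
  have hle : a i ⬝ᵥ (barrierHess a b r xstar)⁻¹ *ᵥ a i ≤ (b i - a i ⬝ᵥ xstar) ^ 2 :=
    dotProduct_inv_mulVec_le ((isUnit_iff_isUnit_det _).1 hH.isUnit) (sq_nonneg _)
      (sq_dotProduct_le_barrierHess a b r i hxstar.1 (hxstar.2 i))
  rw [relevance, one_le_div (Real.sqrt_pos.2 hpos), Real.sqrt_le_iff]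
  exact ⟨(sub_pos.2 (hxstar.2 i)).le, hle⟩

/-- Every relevance measure is at least 1 at the analytic center. -/
theorem relevance_ge_one {n m : ℕ}
    (a : Fin m → Fin n → ℝ) (b : Fin m → ℝ) (r : ℝ) (hr : 0 < r)
    (xstar : Fin n → ℝ) (hxstar : xstar ∈ interiorDom a b r)
    (hmin : ∀ x ∈ interiorDom a b r, barrier a b r xstar ≤ barrier a b r x)
    (i : Fin m) (hai : a i ≠ 0) :
    1 ≤ relevance a b r xstar i :=
  relevance_ge_one_general a b r xstar hxstar i hai
end

section
/- Let x* be the analytic center of Q = {x : ‖x‖² ≤ r², Ax ≤ b} (nonempty interior), and let x be any point in the interior of the domain of Φ. Then the gradient of the conic barrier f(t, x̃, σ) = −log(t² − ‖x̃‖²) − Σᵢ log(σᵢ) at the point (r, x*, b − Ax*) is orthogonal to the vector (0, x − x*, A(x* − x)). -/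
/-!
The point `x*` minimizes `Φ` on the open set `interiorDom`, so the derivative of `Φ` at `x*` in
the direction `x - x*` vanishes. Because the `t`-component of `(0, x - x*, A(x* - x))` is zero
and `σ ↦ -∑ log σᵢ` has gradient `-σ⁻¹`, that directional derivative is exactly the inner
product of `∇f(r, x*, b - Ax*)` with this vector.
-/

open Matrix

section LineDeriv

variable {𝕜 E F : Type*} [NontriviallyNormedField 𝕜] [AddCommGroup E] [Module 𝕜 E]
  [NormedAddCommGroup F] [NormedSpace 𝕜 F] {f g : E → F} {f' g' : F} {x v : E}

theorem HasLineDerivAt.const_sub (c : F) (hf : HasLineDerivAt 𝕜 f f' x v) :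
    HasLineDerivAt 𝕜 (fun y => c - f y) (-f') x v :=
  HasDerivAt.const_sub c hf

theorem HasLineDerivAt.sub (hf : HasLineDerivAt 𝕜 f f' x v) (hg : HasLineDerivAt 𝕜 g g' x v) :
    HasLineDerivAt 𝕜 (fun y => f y - g y) (f' - g') x v :=
  HasDerivAt.sub hf hg

theorem HasLineDerivAt.neg (hf : HasLineDerivAt 𝕜 f f' x v) :
    HasLineDerivAt 𝕜 (fun y => -f y) (-f') x v :=
  HasDerivAt.neg hf

theorem HasLineDerivAt.fun_sum {ι : Type*} {u : Finset ι} {F' : ι → F} {G : ι → E → F}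
    (hG : ∀ i ∈ u, HasLineDerivAt 𝕜 (G i) (F' i) x v) :
    HasLineDerivAt 𝕜 (fun y => ∑ i ∈ u, G i y) (∑ i ∈ u, F' i) x v :=
  HasDerivAt.fun_sum hG

end LineDeriv

theorem HasLineDerivAt.log {E : Type*} [AddCommGroup E] [Module ℝ E] {f : E → ℝ} {f' : ℝ}
    {x v : E} (hf : HasLineDerivAt ℝ f f' x v) (hx : f x ≠ 0) :
    HasLineDerivAt ℝ (fun y => Real.log (f y)) (f' / f x) x v := by
  simpa [HasLineDerivAt] using HasDerivAt.log hf (by simpa using hx)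

section Barrier

variable {n m : ℕ}

theorem hasLineDerivAt_dotProduct (w y v : Fin n → ℝ) :
    HasLineDerivAt ℝ (w ⬝ᵥ ·) (w ⬝ᵥ v) y v := by
  have hline : (fun t : ℝ => w ⬝ᵥ (y + t • v)) = fun t => w ⬝ᵥ y + t * (w ⬝ᵥ v) := by
    ext t
    rw [dotProduct_add, dotProduct_smul, smul_eq_mul]
  rw [HasLineDerivAt, hline]
  simpa using ((hasDerivAt_id (0 : ℝ)).mul_const (w ⬝ᵥ v)).const_add (w ⬝ᵥ y)

theorem hasLineDerivAt_sum_sq (y v : Fin n → ℝ) :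
    HasLineDerivAt ℝ (fun z : Fin n → ℝ => ∑ j, z j ^ 2) (2 * (y ⬝ᵥ v)) y v := by
  have hcoord (j : Fin n) : HasLineDerivAt ℝ (fun z : Fin n → ℝ => z j ^ 2) (2 * y j * v j) y v := by
    simpa [HasLineDerivAt] using
      (((hasDerivAt_id (0 : ℝ)).mul_const (v j)).const_add (y j)).fun_pow 2
  convert HasLineDerivAt.fun_sum fun j _ => hcoord j using 1
  simp only [dotProduct, Finset.mul_sum, mul_assoc]

theorem hasLineDerivAt_barrier {a : Fin m → Fin n → ℝ} {b : Fin m → ℝ} {r : ℝ}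
    {y : Fin n → ℝ} (hy : y ∈ interiorDom a b r) (v : Fin n → ℝ) :
    HasLineDerivAt ℝ (barrier a b r)
      (2 * (y ⬝ᵥ v) / (r ^ 2 - ∑ j, y j ^ 2) + ∑ i, (a i ⬝ᵥ v) / (b i - a i ⬝ᵥ y)) y v := by
  have hball := ((hasLineDerivAt_sum_sq y v).const_sub (r ^ 2)).log (sub_pos.mpr hy.1).ne'
  have hfacets := HasLineDerivAt.fun_sum (u := Finset.univ) fun i _ =>
    ((hasLineDerivAt_dotProduct (a i) y v).const_sub (b i)).log (sub_pos.mpr (hy.2 i)).ne'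
  convert hball.neg.sub hfacets using 1
  · rfl
  · simp only [neg_div, neg_neg, Finset.sum_neg_distrib, sub_neg_eq_add]

theorem isOpen_interiorDom (a : Fin m → Fin n → ℝ) (b : Fin m → ℝ) (r : ℝ) :
    IsOpen (interiorDom a b r) := by
  simp only [interiorDom, Set.ofPred_and, Set.ofPred_forall]
  exact (isOpen_lt (by fun_prop) continuous_const).inter
    (isOpen_iInter_of_finite fun i => isOpen_lt (by fun_prop) continuous_const)

end Barrier

theorem conic_barrier_gradient_orthogonal_general {n m : ℕ}
    (a : Fin m → Fin n → ℝ) (b : Fin m → ℝ) (r : ℝ)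
    (xstar : Fin n → ℝ) (hxstar : xstar ∈ interiorDom a b r)
    (hmin : ∀ x ∈ interiorDom a b r, barrier a b r xstar ≤ barrier a b r x)
    (x : Fin n → ℝ) :
    2 * (xstar ⬝ᵥ (x - xstar)) / (r ^ 2 - ∑ j, xstar j ^ 2) -
      ∑ i, (a i ⬝ᵥ (xstar - x)) / (b i - a i ⬝ᵥ xstar) = 0 := by
  have hlocal : IsLocalMin (barrier a b r) xstar :=
    IsMinOn.isLocalMin (fun y hy => hmin y hy) ((isOpen_interiorDom a b r).mem_nhds hxstar)
  have hcrit := hlocal.hasLineDerivAt_eq_zero (hasLineDerivAt_barrier hxstar (x - xstar))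
  rw [← neg_sub x xstar]
  simpa only [dotProduct_neg, neg_div, Finset.sum_neg_distrib, sub_neg_eq_add] using hcrit

/-- At the analytic center x*, the gradient of the conic barrier
f(t,x̃,σ) = −log(t²−‖x̃‖²) − Σ log σᵢ at (r, x*, b − Ax*) is orthogonal to
(0, x − x*, A(x* − x)); explicitly, the indicated inner product vanishes. -/
theorem conic_barrier_gradient_orthogonal {n m : ℕ}
    (a : Fin m → Fin n → ℝ) (b : Fin m → ℝ) (r : ℝ) (hr : 0 < r)
    (xstar : Fin n → ℝ) (hxstar : xstar ∈ interiorDom a b r)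
    (hmin : ∀ x ∈ interiorDom a b r, barrier a b r xstar ≤ barrier a b r x)
    (x : Fin n → ℝ) (hx : x ∈ interiorDom a b r) :
    2 * (xstar ⬝ᵥ (x - xstar)) / (r ^ 2 - ∑ j, xstar j ^ 2) -
      ∑ i, (a i ⬝ᵥ (xstar - x)) / (b i - a i ⬝ᵥ xstar) = 0 :=
  conic_barrier_gradient_orthogonal_general a b r xstar hxstar hmin x
end

section
/- Let X ∈ S^d and let B = max_{k,l} |X_{kl}|. Suppose (y, z, μ, ν) is feasible for the MILP: Xy + μe − ν = 0, eᵀy = 1, 0 ≤ yᵢ ≤ zᵢ, 0 ≤ νᵢ ≤ 2dB(1 − zᵢ), zᵢ ∈ {0,1} for all i. Then yᵀXy = −μ + yᵀν ≥ −μ, and if additionally yᵢνᵢ = 0 for all i (complementarity, which holds automatically since yᵢ ≤ zᵢ and νᵢ ≤ 2dB(1−zᵢ) with zᵢ ∈ {0,1}), then yᵀXy = −μ. In particular, the minimum of −μ over feasible points is a lower bound on the minimum of yᵀXy over the simplex. -/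
open Matrix

/-! The stationarity equation gives `Xy = ν - μ e`, so `yᵀXy = yᵀν - μ eᵀy = -μ + yᵀν`.
The big-M constraints force `yᵢ = 0` when `zᵢ = 0` and `νᵢ = 0` when `zᵢ = 1`, so `yᵀν = 0`. -/

theorem dotProduct_mulVec_eq_of_stationary {ι R : Type*} [Fintype ι] [CommRing R]
    (X : Matrix ι ι R) (y ν : ι → R) (μ : R) (hstat : ∀ i, (X *ᵥ y) i + μ - ν i = 0)
    (hsum : ∑ i, y i = 1) :
    y ⬝ᵥ X *ᵥ y = -μ + y ⬝ᵥ ν := by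
  have hXy : X *ᵥ y = ν - μ • 1 := funext fun i => by
    simp only [Pi.sub_apply, Pi.smul_apply, Pi.one_apply, smul_eq_mul, mul_one]
    linear_combination hstat i
  rw [hXy, dotProduct_sub, dotProduct_smul, dotProduct_one, hsum, smul_eq_mul, mul_one]
  ring

theorem mul_eq_zero_of_bigM_bounds {R : Type*} [Ring R] [PartialOrder R]
    [IsOrderedRing R] {y ν z M : R} (hy : 0 ≤ y ∧ y ≤ z) (hν : 0 ≤ ν ∧ ν ≤ M * (1 - z))
    (hz : z = 0 ∨ z = 1) :
    y * ν = 0 := by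
  rcases hz with rfl | rfl
  · rw [le_antisymm hy.2 hy.1, zero_mul]
  · rw [sub_self, mul_zero] at hν
    rw [le_antisymm hν.2 hν.1, mul_zero]

theorem milp_feasible_point_value_general {d : ℕ} (X : Matrix (Fin d) (Fin d) ℝ) (B : ℝ)
    (y ν : Fin d → ℝ) (μ : ℝ) (z : Fin d → ℝ)
    (hstat : ∀ i, X.mulVec y i + μ - ν i = 0)
    (hsum : (∑ i, y i) = 1)
    (hy : ∀ i, 0 ≤ y i ∧ y i ≤ z i)
    (hν : ∀ i, 0 ≤ ν i ∧ ν i ≤ 2 * d * B * (1 - z i))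
    (hz : ∀ i, z i = 0 ∨ z i = 1) :
    y ⬝ᵥ X.mulVec y = -μ + y ⬝ᵥ ν ∧
      (∀ i, y i * ν i = 0) ∧
      y ⬝ᵥ X.mulVec y = -μ ∧
      -μ ≤ y ⬝ᵥ X.mulVec y := by
  have hval := dotProduct_mulVec_eq_of_stationary X y ν μ hstat hsum
  have hcomp : ∀ i, y i * ν i = 0 := fun i => mul_eq_zero_of_bigM_bounds (hy i) (hν i) (hz i)
  have hyν : y ⬝ᵥ ν = 0 := Finset.sum_eq_zero fun i _ => hcomp i
  have hval' : y ⬝ᵥ X *ᵥ y = -μ := by rw [hval, hyν, add_zero]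
  exact ⟨hval, hcomp, hval', hval'.ge⟩

/-- Any feasible point of the Xia–Vera–Zuluaga MILP satisfies yᵀXy = −μ + yᵀν;
complementarity yᵢνᵢ = 0 holds automatically, so yᵀXy = −μ. In particular −μ is
a lower bound on yᵀXy over feasible points. -/
theorem milp_feasible_point_value {d : ℕ} (X : Matrix (Fin d) (Fin d) ℝ)
    (hX : X.IsSymm) (B : ℝ) (hB : IsGreatest {v : ℝ | ∃ k l, v = |X k l|} B)
    (y ν : Fin d → ℝ) (μ : ℝ) (z : Fin d → ℝ)
    (hstat : ∀ i, X.mulVec y i + μ - ν i = 0)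
    (hsum : (∑ i, y i) = 1)
    (hy : ∀ i, 0 ≤ y i ∧ y i ≤ z i)
    (hν : ∀ i, 0 ≤ ν i ∧ ν i ≤ 2 * d * B * (1 - z i))
    (hz : ∀ i, z i = 0 ∨ z i = 1) :
    y ⬝ᵥ X.mulVec y = -μ + y ⬝ᵥ ν ∧
      (∀ i, y i * ν i = 0) ∧
      y ⬝ᵥ X.mulVec y = -μ ∧
      -μ ≤ y ⬝ᵥ X.mulVec y :=
  milp_feasible_point_value_general X B y ν μ z hstat hsum hy hν hz
end

section
/- Let X ∈ S^d with B = max_{k,l}|X_{kl}|, and let y* be a minimizer of yᵀXy over the standard simplex. Then each component of the gradient satisfies |(Xy*)ᵢ| ≤ B, and setting μ = −min_i (Xy*)ᵢ and ν = Xy* + μe ≥ 0, one has 0 ≤ νᵢ ≤ 2B ≤ 2dB for all i. Moreover, by KKT optimality, νᵢ yᵢ* = 0 for all i, so (y*, z, μ, ν) with zᵢ = 1 if yᵢ* > 0 and zᵢ = 0 otherwise is feasible for the MILP and attains objective −μ = (y*)ᵀXy*. -/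
/-!
At a minimizer `y*` of the quadratic form over the standard simplex, moving mass `t` from a
coordinate `i` in the support of `y*` to any coordinate `k` changes the objective by
`2t((Xy*)ₖ - (Xy*)ᵢ) + O(t²)`; minimality forces `(Xy*)ᵢ ≤ (Xy*)ₖ`. So the gradient `Xy*` is minimal
on the support, which is exactly the complementarity `νᵢ yᵢ* = 0`. Everything else is bookkeeping
with the entrywise bound `|(Xy*)ᵢ| ≤ B`, valid because `y*` is a convex combination.
-/

open Matrix Filter Topology

theorem abs_mulVec_le_of_mem_stdSimplex {m n : Type*} [Fintype n] {X : Matrix m n ℝ} {B : ℝ}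
    (hXB : ∀ i j, |X i j| ≤ B) {y : n → ℝ} (hy : y ∈ stdSimplex ℝ n) (i : m) :
    |(X *ᵥ y) i| ≤ B :=
  calc |(X *ᵥ y) i| = |∑ j, X i j * y j| := rfl
    _ ≤ ∑ j, |X i j| * y j := by
        refine (Finset.abs_sum_le_sum_abs _ _).trans_eq (Finset.sum_congr rfl fun j _ => ?_)
        rw [abs_mul, abs_of_nonneg (hy.1 j)]
    _ ≤ ∑ j, B * y j :=
        Finset.sum_le_sum fun j _ => mul_le_mul_of_nonneg_right (hXB i j) (hy.1 j)
    _ = B := by rw [← Finset.mul_sum, hy.2, mul_one]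

theorem Matrix.IsSymm.add_smul_dotProduct_mulVec_add_smul {n R : Type*} [Fintype n] [CommRing R]
    {X : Matrix n n R} (hX : X.IsSymm) (y u : n → R) (t : R) :
    (y + t • u) ⬝ᵥ X *ᵥ (y + t • u) =
      y ⬝ᵥ X *ᵥ y + 2 * t * (u ⬝ᵥ X *ᵥ y) + t ^ 2 * (u ⬝ᵥ X *ᵥ u) := by
  have hcomm : y ⬝ᵥ X *ᵥ u = u ⬝ᵥ X *ᵥ y := by
    rw [dotProduct_mulVec, ← mulVec_transpose, hX.eq, dotProduct_comm]
  simp only [mulVec_add, mulVec_smul, dotProduct_add, add_dotProduct, dotProduct_smul,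
    smul_dotProduct, smul_eq_mul, hcomm]
  ring

theorem nonneg_of_forall_mem_Ioc_mul_add_mul_sq_nonneg {b c ε : ℝ} (hε : 0 < ε)
    (h : ∀ t ∈ Set.Ioc 0 ε, 0 ≤ b * t + c * t ^ 2) : 0 ≤ b := by
  by_contra! hb
  have hlim : Tendsto (fun t => b + c * t) (𝓝[>] 0) (𝓝 b) :=
    ((continuous_const.add (continuous_const.mul continuous_id)).tendsto' 0 b
      (by simp)).mono_left nhdsWithin_le_nhds
  obtain ⟨t, ⟨ht0, htε⟩, hneg⟩ :=
    ((eventually_mem_set.2 (Ioo_mem_nhdsGT hε)).and (hlim.eventually (gt_mem_nhds hb))).exists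
  nlinarith [h t ⟨ht0, htε.le⟩, mul_neg_of_pos_of_neg ht0 hneg]

theorem add_smul_single_sub_single_mem_stdSimplex {n 𝕜 : Type*} [Fintype n] [DecidableEq n]
    [Field 𝕜] [LinearOrder 𝕜] [IsStrictOrderedRing 𝕜] {y : n → 𝕜} (hy : y ∈ stdSimplex 𝕜 n)
    {i : n} (k : n) {t : 𝕜} (ht0 : 0 ≤ t) (hti : t ≤ y i) :
    y + t • (Pi.single k 1 - Pi.single i 1) ∈ stdSimplex 𝕜 n := by
  refine ⟨fun j => ?_, ?_⟩
  · simp only [Pi.add_apply, Pi.smul_apply, Pi.sub_apply, smul_eq_mul, Pi.single_apply]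
    have := hy.1 j
    split_ifs with hjk hji <;> subst_vars <;> linarith
  · simp [Finset.sum_add_distrib, ← Finset.mul_sum, hy.2]

theorem mulVec_apply_le_of_isMinOn_stdSimplex {n : Type*} [Fintype n] [DecidableEq n]
    {X : Matrix n n ℝ} (hX : X.IsSymm) {y : n → ℝ} (hy : y ∈ stdSimplex ℝ n)
    (hmin : IsMinOn (fun v => v ⬝ᵥ X *ᵥ v) (stdSimplex ℝ n) y) {i : n} (hi : 0 < y i) (k : n) :
    (X *ᵥ y) i ≤ (X *ᵥ y) k := by
  set u : n → ℝ := Pi.single k 1 - Pi.single i 1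
  have huy : u ⬝ᵥ X *ᵥ y = (X *ᵥ y) k - (X *ᵥ y) i := by
    simp [u, sub_dotProduct, single_dotProduct]
  have hslope : 0 ≤ 2 * (u ⬝ᵥ X *ᵥ y) := by
    refine nonneg_of_forall_mem_Ioc_mul_add_mul_sq_nonneg (c := u ⬝ᵥ X *ᵥ u) hi fun t ht => ?_
    have := isMinOn_iff.1 hmin _ (add_smul_single_sub_single_mem_stdSimplex hy k ht.1.le ht.2)
    rw [hX.add_smul_dotProduct_mulVec_add_smul] at this
    linarith
  linarith

theorem mulVec_apply_eq_inf'_of_isMinOn_stdSimplex {n : Type*} [Fintype n] [DecidableEq n]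
    {X : Matrix n n ℝ} (hX : X.IsSymm) {y : n → ℝ} (hy : y ∈ stdSimplex ℝ n)
    (hmin : IsMinOn (fun v => v ⬝ᵥ X *ᵥ v) (stdSimplex ℝ n) y) {i : n} (hi : 0 < y i)
    (hn : (Finset.univ : Finset n).Nonempty) :
    (X *ᵥ y) i = Finset.univ.inf' hn (X *ᵥ y) :=
  le_antisymm (Finset.le_inf' _ _ fun k _ => mulVec_apply_le_of_isMinOn_stdSimplex hX hy hmin hi k)
    (Finset.inf'_le _ (Finset.mem_univ i))

theorem sub_inf'_le_two_mul {ι : Type*} {s : Finset ι} (hs : s.Nonempty) {g : ι → ℝ} {B : ℝ}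
    (hg : ∀ i ∈ s, |g i| ≤ B) {i : ι} (hi : i ∈ s) : g i - s.inf' hs g ≤ 2 * B := by
  obtain ⟨k, hk, hkg⟩ := s.exists_mem_eq_inf' hs g
  rw [hkg]
  linarith [(abs_le.1 (hg i hi)).2, (abs_le.1 (hg k hk)).1]

theorem dotProduct_eq_neg_of_forall_add_mul_eq_zero {n R : Type*} [Fintype n] [CommRing R]
    {y g : n → R} (hy : ∑ i, y i = 1) {μ : R} (h : ∀ i, (g i + μ) * y i = 0) :
    y ⬝ᵥ g = -μ :=
  calc y ⬝ᵥ g = ∑ i, ((g i + μ) * y i - μ * y i) := Finset.sum_congr rfl fun i _ => by ring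
    _ = -μ := by simp [h, ← Finset.mul_sum, hy]

/-- From a minimizer y* of yᵀXy over the standard simplex one obtains a feasible
point of the Xia–Vera–Zuluaga MILP with objective value −μ = (y*)ᵀXy*:
setting μ = −minᵢ (Xy*)ᵢ, ν = Xy* + μe, and z the indicator of supp(y*),
one has |(Xy*)ᵢ| ≤ B, 0 ≤ νᵢ ≤ 2B ≤ 2dB, complementarity νᵢyᵢ* = 0,
and all the MILP constraints hold. -/
theorem milp_upper_bound_from_simplex_minimizer {d : ℕ} [NeZero d]
    (X : Matrix (Fin d) (Fin d) ℝ) (hX : X.IsSymm)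
    (B : ℝ) (hB : IsGreatest {v : ℝ | ∃ k l, v = |X k l|} B)
    (ystar : Fin d → ℝ) (hynn : ∀ i, 0 ≤ ystar i) (hysum : (∑ i, ystar i) = 1)
    (hymin : ∀ y : Fin d → ℝ, (∀ i, 0 ≤ y i) → (∑ i, y i) = 1 →
      ystar ⬝ᵥ X.mulVec ystar ≤ y ⬝ᵥ X.mulVec y)
    (μ : ℝ) (hμ : μ = -(Finset.univ.inf' (Finset.univ_nonempty) fun i => X.mulVec ystar i))
    (ν : Fin d → ℝ) (hν : ∀ i, ν i = X.mulVec ystar i + μ)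
    (z : Fin d → ℝ) (hz : ∀ i, z i = if 0 < ystar i then 1 else 0) :
    (∀ i, |X.mulVec ystar i| ≤ B) ∧
      (∀ i, 0 ≤ ν i ∧ ν i ≤ 2 * B) ∧ 2 * B ≤ 2 * d * B ∧
      (∀ i, ν i * ystar i = 0) ∧
      (∀ i, X.mulVec ystar i + μ - ν i = 0) ∧
      (∀ i, 0 ≤ ystar i ∧ ystar i ≤ z i) ∧
      (∀ i, 0 ≤ ν i ∧ ν i ≤ 2 * d * B * (1 - z i)) ∧
      (∀ i, z i = 0 ∨ z i = 1) ∧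
      -μ = ystar ⬝ᵥ X.mulVec ystar := by
  have hy : ystar ∈ stdSimplex ℝ (Fin d) := ⟨hynn, hysum⟩
  have hmin : IsMinOn (fun v => v ⬝ᵥ X *ᵥ v) (stdSimplex ℝ (Fin d)) ystar :=
    isMinOn_iff.2 fun y hy' => hymin y hy'.1 hy'.2
  have hgrad := abs_mulVec_le_of_mem_stdSimplex (fun k l => hB.2 ⟨k, l, rfl⟩) hy
  have hBdB : 2 * B ≤ 2 * d * B := by
    obtain ⟨k, l, hkl⟩ := hB.1
    have : (1 : ℝ) ≤ d := by exact_mod_cast NeZero.one_le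
    nlinarith [abs_nonneg (X k l)]
  have hν0 : ∀ i, 0 ≤ ν i := fun i => by
    rw [hν, hμ, ← sub_eq_add_neg, sub_nonneg]
    exact Finset.inf'_le _ (Finset.mem_univ i)
  have hν2B : ∀ i, ν i ≤ 2 * B := fun i => by
    rw [hν, hμ, ← sub_eq_add_neg]
    exact sub_inf'_le_two_mul _ (fun k _ => hgrad k) (Finset.mem_univ i)
  have hνsupp : ∀ i, 0 < ystar i → ν i = 0 := fun i hi => by
    rw [hν, hμ, ← mulVec_apply_eq_inf'_of_isMinOn_stdSimplex hX hy hmin hi, add_neg_cancel]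
  have hcompl : ∀ i, ν i * ystar i = 0 := fun i => by
    rcases (hynn i).lt_or_eq with hi | hi
    · rw [hνsupp i hi, zero_mul]
    · rw [← hi, mul_zero]
  refine ⟨hgrad, fun i => ⟨hν0 i, hν2B i⟩, hBdB, hcompl, fun i => by rw [hν]; ring,
    fun i => ⟨hynn i, ?_⟩, fun i => ⟨hν0 i, ?_⟩, fun i => ?_, ?_⟩
  · rw [hz]
    split_ifs with hi
    · exact (mem_Icc_of_mem_stdSimplex hy i).2
    · exact not_lt.1 hi
  · rw [hz]
    split_ifs with hi
    · simp [hνsupp i hi]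
    · linarith [hν2B i]
  · rw [hz]
    split_ifs <;> simp
  · exact (dotProduct_eq_neg_of_forall_add_mul_eq_zero hysum fun i => hν i ▸ hcompl i).symm
end
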